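/- If G is a {2K_2, HVN}-free graph with ω(G) ≥ 4, then χ(G) = ω(G). -/

import Mathlib

open SimpleGraph

/-- The disjoint union of `p` edges. -/
def pK2 (p : ℕ) : SimpleGraph (Fin p × Fin 2) where
  Adj a b := a.1 = b.1 ∧ a.2 ≠ b.2
  symm := ⟨fun _ _ ⟨h1, h2⟩ => ⟨h1.symm, h2.symm⟩⟩
  loopless := ⟨fun _ ⟨_, h⟩ => h rfl⟩

/-- `G` is `H`-free: no induced subgraph of `G` is isomorphic to `H`. -/
def IsFreeOf {V W : Type*} (G : SimpleGraph V) (H : SimpleGraph W) : Prop :=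
  IsEmpty (H ↪g G)

/-- A graph on `Fin n` with edges given by a list of pairs. -/
def graphOfList (n : ℕ) (l : List (ℕ × ℕ)) : SimpleGraph (Fin n) :=
  SimpleGraph.fromRel (fun a b => ((a : ℕ), (b : ℕ)) ∈ l)

/-- HVN: `K_4` plus a vertex adjacent to exactly two of its vertices. -/
def HVN : SimpleGraph (Fin 5) :=
  graphOfList 5 [(0,1),(0,2),(0,3),(1,2),(1,3),(2,3),(0,4),(1,4)]

/-!
Fix a maximum clique `K`, of size `ω ≥ 4`, and for `x ∈ K` let `A_x = adjExcept G K x` be the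
set of vertices adjacent to every vertex of `K` but `x` (so `x ∈ A_x`). HVN-freeness makes `A_x`
complete to `A_y` for `x ≠ y`, hence every vertex `b` is anticomplete to some `A_x`: otherwise `b`
and a neighbour of `b` in each `A_x` form a clique of size `ω + 1`. Colour `b` by such an `x`.
Two adjacent vertices of colour `x` lie in no `A_y` (a vertex of `A_y`, `y ≠ x`, sees
`x ∈ A_x`), so by HVN-freeness each has at most one neighbour in `K`; as `|K| ≥ 4`, two such
vertices cannot be adjacent in a `2K_2`-free graph.
-/

namespace IsFreeOf

variable {V W : Type*} {G : SimpleGraph V}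

theorem false_of_adj_iff {H : SimpleGraph W} (h : IsFreeOf G H) {f : W → V}
    (hf : Function.Injective f) (hadj : ∀ i j, G.Adj (f i) (f j) ↔ H.Adj i j) : False :=
  h.false ⟨⟨f, hf⟩, hadj _ _⟩

theorem adj_of_pK2_two (h : IsFreeOf G (pK2 2)) {v w x y : V} (hvw : G.Adj v w)
    (hxy : G.Adj x y) : G.Adj v x ∨ G.Adj v y ∨ G.Adj w x ∨ G.Adj w y := by
  by_contra! hno
  obtain ⟨hvx, hvy, hwx, hwy⟩ := hno
  refine h.false_of_adj_iff (f := fun p => ![![v, w], ![x, y]] p.1 p.2) ?_ ?_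
  · rintro ⟨a1, a2⟩ ⟨b1, b2⟩ hab
    fin_cases a1 <;> fin_cases a2 <;> fin_cases b1 <;> fin_cases b2 <;>
      simp_all [hvw.ne, hxy.ne, G.adj_comm]
  · rintro ⟨a1, a2⟩ ⟨b1, b2⟩
    fin_cases a1 <;> fin_cases a2 <;> fin_cases b1 <;> fin_cases b2 <;>
      simp_all [pK2, G.adj_comm]

theorem adj_of_HVN (h : IsFreeOf G HVN) {a b c d e : V} (hab : G.Adj a b) (hac : G.Adj a c)
    (had : G.Adj a d) (hbc : G.Adj b c) (hbd : G.Adj b d) (hcd : G.Adj c d)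
    (hae : G.Adj a e) (hbe : G.Adj b e) : G.Adj c e ∨ G.Adj d e := by
  by_contra! hno
  obtain ⟨hce, hde⟩ := hno
  refine h.false_of_adj_iff (f := ![a, b, c, d, e]) ?_ ?_
  · intro i j hij
    fin_cases i <;> fin_cases j <;>
      simp_all [hab.ne, hac.ne, had.ne, hbc.ne, hbd.ne, hcd.ne, hae.ne, hbe.ne, G.adj_comm]
  · intro i j
    fin_cases i <;> fin_cases j <;> simp_all [HVN, graphOfList, G.adj_comm]

end IsFreeOf

open Finset

namespace SimpleGraph

variable {V : Type*} {G : SimpleGraph V} {K : Finset V}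

def adjExcept (G : SimpleGraph V) (K : Finset V) (x : V) : Set V :=
  {v | ¬G.Adj v x ∧ ∀ y ∈ K, y ≠ x → G.Adj v y}

theorem IsClique.mem_adjExcept (hK : G.IsClique K) {x : V} (hx : x ∈ K) :
    x ∈ G.adjExcept K x :=
  ⟨G.loopless.irrefl x, fun _ hy hyx => hK hx hy hyx.symm⟩

theorem IsMaximumClique.exists_not_adj [Finite V] (hK : G.IsMaximumClique K) (v : V) :
    ∃ x ∈ K, ¬G.Adj v x := by
  classical
  by_contra! hadj
  have hv : v ∉ K := fun hv => G.loopless.irrefl v (hadj v hv)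
  have hclique : G.IsClique (insert v K : Finset V) := by
    rw [coe_insert]
    exact hK.isClique.insert fun y hy _ => hadj y hy
  have := hK.maximum _ hclique
  rw [card_insert_of_notMem hv] at this
  omega

theorem adj_of_mem_adjExcept (h : IsFreeOf G HVN) (hK : G.IsClique K) (hK4 : 4 ≤ #K)
    {x y v w : V} (hy : y ∈ K) (hxy : x ≠ y) (hv : v ∈ G.adjExcept K x)
    (hw : w ∈ G.adjExcept K y) : G.Adj v w := by
  classical
  have hyx : y ∈ K.erase x := mem_erase.2 ⟨hxy.symm, hy⟩
  have hrest : 1 < #((K.erase x).erase y) := by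
    have := pred_card_le_card_erase (s := K) (a := x)
    rw [card_erase_of_mem hyx]
    omega
  obtain ⟨z, hz, t, ht, hzt⟩ := one_lt_card.1 hrest
  simp only [mem_erase] at hz ht
  have hvK : ∀ u ∈ K, u ≠ x → G.Adj u v := fun u hu hux => (hv.2 u hu hux).symm
  have hwK : ∀ u ∈ K, u ≠ y → G.Adj u w := fun u hu huy => (hw.2 u hu huy).symm
  -- `z, t, y, v` is a `K_4` and `w` sees `z, t` but not `y`
  exact (h.adj_of_HVN (hK hz.2.2 ht.2.2 hzt) (hK hz.2.2 hy hz.1) (hvK z hz.2.2 hz.2.1)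
    (hK ht.2.2 hy ht.1) (hvK t ht.2.2 ht.2.1) (hvK y hy hxy.symm) (hwK z hz.2.2 hz.1)
    (hwK t ht.2.2 ht.1)).resolve_left fun hyw => hw.1 hyw.symm

theorem IsMaximumClique.exists_mem_adjExcept_or_card_le_one [Finite V] [DecidableRel G.Adj]
    (h : IsFreeOf G HVN) (hK : G.IsMaximumClique K) (v : V) :
    (∃ x ∈ K, v ∈ G.adjExcept K x) ∨ #{y ∈ K | G.Adj v y} ≤ 1 := by
  refine or_iff_not_imp_right.2 fun hcard => ?_
  obtain ⟨p, hp, q, hq, hpq⟩ := one_lt_card.1 (not_le.1 hcard)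
  simp only [mem_filter] at hp hq
  obtain ⟨x, hx, hvx⟩ := hK.exists_not_adj v
  refine ⟨x, hx, hvx, fun y hy hyx => ?_⟩
  by_contra hvy
  have hne : ∀ {u}, G.Adj v u → ∀ {u'}, ¬G.Adj v u' → u ≠ u' := by
    rintro u hu u' hu' rfl
    exact hu' hu
  have hKc := hK.isClique
  rcases h.adj_of_HVN (hKc hp.1 hq.1 hpq) (hKc hp.1 hx (hne hp.2 hvx))
    (hKc hp.1 hy (hne hp.2 hvy)) (hKc hq.1 hx (hne hq.2 hvx)) (hKc hq.1 hy (hne hq.2 hvy))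
    (hKc hx hy hyx.symm) hp.2.symm hq.2.symm with hxv | hyv
  · exact hvx hxv.symm
  · exact hvy hyv.symm

theorem not_adj_of_card_le_one [DecidableRel G.Adj] (h : IsFreeOf G (pK2 2))
    (hK : G.IsClique K) (hK4 : 4 ≤ #K) {v w : V} (hv : #{y ∈ K | G.Adj v y} ≤ 1)
    (hw : #{y ∈ K | G.Adj w y} ≤ 1) : ¬G.Adj v w := by
  classical
  intro hvw
  have hseen : #{y ∈ K | G.Adj v y ∨ G.Adj w y} ≤ 2 := by
    rw [filter_or]
    convert (card_union_le _ _).trans (add_le_add hv hw)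
  have hsplit := card_filter_add_card_filter_not (s := K) (fun y => G.Adj v y ∨ G.Adj w y)
  have hunseen : 1 < #{y ∈ K | ¬(G.Adj v y ∨ G.Adj w y)} := by omega
  obtain ⟨x, hx, y, hy, hxy⟩ := one_lt_card.1 hunseen
  simp only [mem_filter] at hx hy
  have := h.adj_of_pK2_two hvw (hK hx.1 hy.1 hxy)
  tauto

theorem IsMaximumClique.exists_forall_not_adj_adjExcept [Finite V] (h : IsFreeOf G HVN)
    (hK : G.IsMaximumClique K) (hK4 : 4 ≤ #K) (b : V) :
    ∃ x ∈ K, ∀ u ∈ G.adjExcept K x, ¬G.Adj b u := by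
  classical
  by_contra! hall
  choose f hfA hbf using hall
  let g : K ↪ V := ⟨fun x => f x x.2, fun x y (hxy : f x x.2 = f y y.2) =>
    Subtype.ext <| by_contra fun hne => (hfA y y.2).1 (hxy ▸ (hfA x x.2).2 y y.2 (Ne.symm hne))⟩
  have hb : b ∉ univ.map g := by
    simp only [mem_map, mem_univ, true_and, not_exists]
    exact fun x hx => G.loopless.irrefl b (hx ▸ hbf x x.2)
  have hclique : G.IsClique (insert b (univ.map g) : Finset V) := by
    rw [coe_insert, coe_map, coe_univ, Set.image_univ]
    refine IsClique.insert ?_ ?_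
    · rintro _ ⟨x, rfl⟩ _ ⟨y, rfl⟩ hxy
      exact adj_of_mem_adjExcept h hK.isClique hK4 y.2
        (fun h => hxy (congrArg g (Subtype.ext h))) (hfA x x.2) (hfA y y.2)
    · rintro _ ⟨x, rfl⟩ -
      exact hbf x x.2
  have := hK.maximum _ hclique
  rw [card_insert_of_notMem hb, card_map, card_univ, Fintype.card_coe] at this
  omega

theorem IsMaximumClique.colorable_card [Finite V] (h1 : IsFreeOf G (pK2 2))
    (h2 : IsFreeOf G HVN) (hK : G.IsMaximumClique K) (hK4 : 4 ≤ #K) : G.Colorable #K := by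
  classical
  choose c hcK hc using hK.exists_forall_not_adj_adjExcept h2 hK4
  have hnotMem : ∀ {v w}, G.Adj v w → c v = c w → ∀ y ∈ K, v ∉ G.adjExcept K y := by
    intro v w hvw hcvw y hy hv
    rcases eq_or_ne y (c v) with rfl | hyc
    · exact hc w v (hcvw ▸ hv) hvw.symm
    · exact hc v (c v) (hK.isClique.mem_adjExcept (hcK v)) (hv.2 _ (hcK v) hyc.symm)
  have hfew : ∀ {v w}, G.Adj v w → c v = c w → #{y ∈ K | G.Adj v y} ≤ 1 := fun hvw hcvw =>
    (hK.exists_mem_adjExcept_or_card_le_one h2 _).resolve_left fun ⟨y, hy, hv⟩ =>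
      hnotMem hvw hcvw y hy hv
  let C : G.Coloring K := Coloring.mk (fun v => ⟨c v, hcK v⟩) fun {v w} hvw hcvw => by
    have hcvw : c v = c w := congrArg Subtype.val hcvw
    exact not_adj_of_card_le_one h1 hK.isClique hK4 (hfew hvw hcvw) (hfew hvw.symm hcvw.symm)
      hvw
  simpa only [Fintype.card_coe] using C.colorable

end SimpleGraph

theorem chromatic_eq_of_2K2_HVN_free {V : Type*} [Fintype V] (G : SimpleGraph V)
    (h1 : IsFreeOf G (pK2 2)) (h2 : IsFreeOf G HVN) (hω : 4 ≤ G.cliqueNum) :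
    G.chromaticNumber = (G.cliqueNum : ℕ∞) := by
  obtain ⟨K, hK⟩ := G.maximumClique_exists
  have hcard : #K = G.cliqueNum := G.maximumClique_card_eq_cliqueNum K hK
  refine le_antisymm ?_ G.cliqueNum_le_chromaticNumber
  rw [← hcard]
  exact (hK.colorable_card h1 h2 (hcard ▸ hω)).chromaticNumber_le
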